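/- Degree-2 Spencer cocycle vanishing (key step for H^{2,1}(m, F(4)) = 0 in the odd contact grading): let ω ∈ span_ℂ{Γ_{μν} : 1 ≤ μ < ν ≤ 7} ⊂ M₈(ℂ). If for every s ∈ ℂ⁸ one has (1/3)·Σ_{α,β=1}^{7} ((ωs)ᵀ C Γ_{αβ} s)·Γ_{αβ} = (sᵀCs)·ω as 8×8 matrices, then ω = 0. -/
import Mathlib


open Matrix

noncomputable section

/-- The antisymmetrized product `Γ_{μν} = (1/2)(Γ_μΓ_ν − Γ_νΓ_μ)`. -/
def gamma2 (Γ : Fin 7 → Matrix (Fin 8) (Fin 8) ℂ) (μ ν : Fin 7) :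
    Matrix (Fin 8) (Fin 8) ℂ :=
  (2 : ℂ)⁻¹ • (Γ μ * Γ ν - Γ ν * Γ μ)

variable {Γ : Fin 7 → Matrix (Fin 8) (Fin 8) ℂ}

abbrev CliffordRel (Γ : Fin 7 → Matrix (Fin 8) (Fin 8) ℂ) : Prop :=
  ∀ μ ν, Γ μ * Γ ν + Γ ν * Γ μ =
      if μ = ν then (-2 : ℂ) • (1 : Matrix (Fin 8) (Fin 8) ℂ) else 0

lemma gamma_sq (hΓ : CliffordRel Γ) (μ : Fin 7) : Γ μ * Γ μ = -1 := by
  have h := hΓ μ μ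
  rw [if_pos rfl] at h
  have h2 : (2:ℂ) • (Γ μ * Γ μ) = (2:ℂ) • (-1 : Matrix (Fin 8) (Fin 8) ℂ) := by
    rw [two_smul, h]; ext i j; simp
  exact smul_right_injective _ two_ne_zero h2

lemma gamma_anti (hΓ : CliffordRel Γ) {μ ν : Fin 7} (hne : μ ≠ ν) :
    Γ μ * Γ ν = -(Γ ν * Γ μ) := by
  have h := hΓ μ ν
  rw [if_neg hne] at h
  exact eq_neg_of_add_eq_zero_left h

lemma gamma2_self (μ : Fin 7) : gamma2 Γ μ μ = 0 := by simp [gamma2]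

lemma gamma2_swap (μ ν : Fin 7) : gamma2 Γ ν μ = -(gamma2 Γ μ ν) := by
  simp [gamma2, smul_sub]

lemma gamma2_eq (hΓ : CliffordRel Γ) {μ ν : Fin 7} (hne : μ ≠ ν) :
    gamma2 Γ μ ν = Γ μ * Γ ν := by
  rw [gamma2, gamma_anti hΓ hne.symm]
  rw [sub_neg_eq_add, ← two_smul ℂ, smul_smul]
  norm_num

lemma trace_pair (hΓ : CliffordRel Γ) {μ ν : Fin 7} (hne : μ ≠ ν) :
    trace (Γ μ * Γ ν) = 0 := by
  have h1 : trace (Γ μ * Γ ν) = trace (Γ ν * Γ μ) := trace_mul_comm _ _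
  rw [gamma_anti hΓ hne.symm, trace_neg] at h1
  linear_combination h1 / 2

lemma trace_four (hΓ : CliffordRel Γ) {μ ν α β : Fin 7}
    (h1 : μ ≠ ν) (h2 : μ ≠ α) (h3 : μ ≠ β) :
    trace (Γ μ * Γ ν * (Γ α * Γ β)) = 0 := by
  have e1 : Γ ν * Γ μ = -(Γ μ * Γ ν) := gamma_anti hΓ h1.symm
  have e2 : Γ α * Γ μ = -(Γ μ * Γ α) := gamma_anti hΓ h2.symm
  have e3 : Γ β * Γ μ = -(Γ μ * Γ β) := gamma_anti hΓ h3.symm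
  have key : Γ ν * (Γ α * Γ β) * Γ μ = -(Γ μ * Γ ν * (Γ α * Γ β)) := by
    calc Γ ν * (Γ α * Γ β) * Γ μ = Γ ν * (Γ α * (Γ β * Γ μ)) := by
          simp [mul_assoc]
      _ = Γ ν * (Γ α * (-(Γ μ * Γ β))) := by rw [e3]
      _ = -(Γ ν * (Γ α * Γ μ * Γ β)) := by simp [mul_assoc]
      _ = -(Γ ν * (-(Γ μ * Γ α) * Γ β)) := by rw [e2]
      _ = Γ ν * Γ μ * (Γ α * Γ β) := by simp [mul_assoc]
      _ = -(Γ μ * Γ ν) * (Γ α * Γ β) := by rw [e1]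
      _ = -(Γ μ * Γ ν * (Γ α * Γ β)) := by simp
  have h4 : trace (Γ μ * Γ ν * (Γ α * Γ β)) = trace (Γ ν * (Γ α * Γ β) * Γ μ) := by
    rw [mul_assoc, trace_mul_comm]
  rw [key, trace_neg] at h4
  linear_combination h4 / 2

lemma trace_orth (hΓ : CliffordRel Γ) (μ ν α β : Fin 7) :
    trace (gamma2 Γ μ ν * gamma2 Γ α β) =
      (if α = ν ∧ β = μ then (8:ℂ) else 0) - (if α = μ ∧ β = ν then (8:ℂ) else 0) := by
  by_cases hμν : μ = ν
  · rw [← hμν, gamma2_self, zero_mul, trace_zero]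
    have : (α = μ ∧ β = μ) ↔ (α = μ ∧ β = μ) := Iff.rfl
    rw [sub_self]
  by_cases hαβ : α = β
  · rw [← hαβ, gamma2_self, mul_zero, trace_zero]
    have hiff : (α = ν ∧ α = μ) ↔ (α = μ ∧ α = ν) := and_comm
    rw [if_congr hiff rfl rfl, sub_self]
  rw [gamma2_eq hΓ hμν, gamma2_eq hΓ hαβ]
  by_cases h1 : α = μ
  · by_cases h2 : β = ν
    · rw [h1, h2]
      have hprod : Γ μ * Γ ν * (Γ μ * Γ ν) = -1 := by
        calc Γ μ * Γ ν * (Γ μ * Γ ν) = Γ μ * (Γ ν * Γ μ) * Γ ν := by simp [mul_assoc]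
          _ = Γ μ * (-(Γ μ * Γ ν)) * Γ ν := by rw [gamma_anti hΓ (Ne.symm hμν)]
          _ = -(Γ μ * Γ μ * (Γ ν * Γ ν)) := by simp [mul_assoc]
          _ = -1 := by rw [gamma_sq hΓ, gamma_sq hΓ]; simp
      rw [hprod, if_neg (fun hc => hμν hc.1), if_pos ⟨rfl, rfl⟩]
      simp [trace_neg, trace_one]
    · rw [h1]
      have hprod : Γ μ * Γ ν * (Γ μ * Γ β) = Γ ν * Γ β := by
        calc Γ μ * Γ ν * (Γ μ * Γ β) = Γ μ * (Γ ν * Γ μ) * Γ β := by simp [mul_assoc]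
          _ = Γ μ * (-(Γ μ * Γ ν)) * Γ β := by rw [gamma_anti hΓ (Ne.symm hμν)]
          _ = -(Γ μ * Γ μ * (Γ ν * Γ β)) := by simp [mul_assoc]
          _ = Γ ν * Γ β := by rw [gamma_sq hΓ]; simp
      rw [hprod, trace_pair hΓ (fun hc => h2 hc.symm)]
      rw [if_neg (fun hc => hμν hc.1), if_neg (fun hc => h2 hc.2), sub_self]
  · by_cases h2 : β = μ
    · by_cases h3 : α = ν
      · rw [h2, h3]
        have hprod : Γ μ * Γ ν * (Γ ν * Γ μ) = 1 := by
          calc Γ μ * Γ ν * (Γ ν * Γ μ) = Γ μ * (Γ ν * Γ ν) * Γ μ := by simp [mul_assoc]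
            _ = Γ μ * (-1) * Γ μ := by rw [gamma_sq hΓ]
            _ = -(Γ μ * Γ μ) := by simp
            _ = 1 := by rw [gamma_sq hΓ]; simp
        rw [hprod, trace_one, if_pos ⟨rfl, rfl⟩, if_neg (fun hc => hμν hc.1.symm)]
        norm_num
      · rw [h2]
        have hprod : Γ μ * Γ ν * (Γ α * Γ μ) = -(Γ ν * Γ α) := by
          calc Γ μ * Γ ν * (Γ α * Γ μ) = Γ μ * Γ ν * (-(Γ μ * Γ α)) := by
                rw [gamma_anti hΓ h1]
            _ = -(Γ μ * (Γ ν * Γ μ) * Γ α) := by simp [mul_assoc]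
            _ = -(Γ μ * (-(Γ μ * Γ ν)) * Γ α) := by rw [gamma_anti hΓ (Ne.symm hμν)]
            _ = Γ μ * Γ μ * (Γ ν * Γ α) := by simp [mul_assoc]
            _ = -(Γ ν * Γ α) := by rw [gamma_sq hΓ]; simp
        rw [hprod, trace_neg, trace_pair hΓ (fun hc => h3 hc.symm)]
        rw [if_neg (fun hc => h3 hc.1), if_neg (fun hc => h1 hc.1)]
        simp
    · by_cases h3 : α = ν
      · rw [h3]
        have hprod : Γ μ * Γ ν * (Γ ν * Γ β) = -(Γ μ * Γ β) := by
          calc Γ μ * Γ ν * (Γ ν * Γ β) = Γ μ * (Γ ν * Γ ν) * Γ β := by simp [mul_assoc]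
            _ = Γ μ * (-1) * Γ β := by rw [gamma_sq hΓ]
            _ = -(Γ μ * Γ β) := by simp
        rw [hprod, trace_neg, trace_pair hΓ (fun hc => h2 hc.symm)]
        rw [if_neg (fun hc => h2 hc.2), if_neg (fun hc => hμν hc.1.symm)]
        simp
      · by_cases h4 : β = ν
        · rw [h4]
          have hprod : Γ μ * Γ ν * (Γ α * Γ ν) = Γ μ * Γ α := by
            calc Γ μ * Γ ν * (Γ α * Γ ν) = Γ μ * Γ ν * (-(Γ ν * Γ α)) := by
                  rw [gamma_anti hΓ h3]
              _ = -(Γ μ * (Γ ν * Γ ν) * Γ α) := by simp [mul_assoc]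
              _ = -(Γ μ * (-1) * Γ α) := by rw [gamma_sq hΓ]
              _ = Γ μ * Γ α := by simp
          rw [hprod, trace_pair hΓ (fun hc => h1 hc.symm)]
          rw [if_neg (fun hc => hμν hc.2.symm), if_neg (fun hc => h1 hc.1), sub_self]
        · rw [trace_four hΓ hμν (fun hc => h1 hc.symm) (fun hc => h2 hc.symm)]
          rw [if_neg (fun hc => h2 hc.2), if_neg (fun hc => h1 hc.1), sub_self]

lemma mySumCollapse {M : Type*} [AddCommMonoid M] (g : Fin 7 → Fin 7 → M) (a b : Fin 7) :
    ∑ α, ∑ β, (if α = a ∧ β = b then g α β else 0) = g a b := by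
  simp [ite_and, Finset.sum_ite_eq']

lemma gamma2_transpose_C
    (C : Matrix (Fin 8) (Fin 8) ℂ) (hCΓ : ∀ μ, (Γ μ)ᵀ * C = -(C * Γ μ)) (μ ν : Fin 7) :
    (gamma2 Γ μ ν)ᵀ * C = -(C * gamma2 Γ μ ν) := by
  have key : ∀ a b : Fin 7, (Γ a * Γ b)ᵀ * C = C * (Γ b * Γ a) := by
    intro a b
    rw [transpose_mul, mul_assoc, hCΓ a, mul_neg, ← mul_assoc, hCΓ b]
    simp [mul_assoc]
  unfold gamma2
  rw [transpose_smul, transpose_sub, smul_mul_assoc, sub_mul, key μ ν, key ν μ]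
  rw [mul_smul_comm, mul_sub, smul_sub, smul_sub]
  abel

-- polarization
lemma polarize (N : Matrix (Fin 8) (Fin 8) ℂ) (h : ∀ s, s ⬝ᵥ N.mulVec s = 0) :
    N + Nᵀ = 0 := by
  ext i j
  have hij := h (Pi.single i 1 + Pi.single j 1)
  have hi := h (Pi.single i 1)
  have hj := h (Pi.single j 1)
  simp [mulVec_add, dotProduct_add, add_dotProduct, mulVec_single,
    single_dotProduct, dotProduct_single] at hij hi hj
  simp [transpose_apply]
  linear_combination hij - hi - hj

-- L2 : ωᵀ C = -(C ω) for ω in the span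
lemma span_transpose_C
    (C : Matrix (Fin 8) (Fin 8) ℂ) (hCΓ : ∀ μ, (Γ μ)ᵀ * C = -(C * Γ μ))
    {ω : Matrix (Fin 8) (Fin 8) ℂ}
    (hω : ω ∈ Submodule.span ℂ
      {m : Matrix (Fin 8) (Fin 8) ℂ | ∃ μ ν : Fin 7, μ < ν ∧ m = gamma2 Γ μ ν}) :
    ωᵀ * C = -(C * ω) := by
  induction hω using Submodule.span_induction with
  | mem x hx =>
    obtain ⟨μ, ν, -, rfl⟩ := hx
    exact gamma2_transpose_C C hCΓ μ ν
  | zero => simp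
  | add x y hx hy ihx ihy =>
    rw [transpose_add, add_mul, ihx, ihy, mul_add, neg_add]
  | smul a x hx ihx =>
    rw [transpose_smul, smul_mul_assoc, ihx, mul_smul_comm, smul_neg]

-- L3 : reconstruction
lemma span_reconstruct (hΓ : CliffordRel Γ)
    {ω : Matrix (Fin 8) (Fin 8) ℂ}
    (hω : ω ∈ Submodule.span ℂ
      {m : Matrix (Fin 8) (Fin 8) ℂ | ∃ μ ν : Fin 7, μ < ν ∧ m = gamma2 Γ μ ν}) :
    ∑ α, ∑ β, trace (ω * gamma2 Γ α β) • gamma2 Γ α β = (-16 : ℂ) • ω := by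
  induction hω using Submodule.span_induction with
  | mem x hx =>
    obtain ⟨μ, ν, -, rfl⟩ := hx
    have step : ∀ α β : Fin 7, trace (gamma2 Γ μ ν * gamma2 Γ α β) • gamma2 Γ α β
        = (if α = ν ∧ β = μ then (8:ℂ) • gamma2 Γ α β else 0)
          - (if α = μ ∧ β = ν then (8:ℂ) • gamma2 Γ α β else 0) := by
      intro α β
      rw [trace_orth hΓ, sub_smul]
      congr 1 <;> (split_ifs <;> simp)
    simp only [step]
    simp only [Finset.sum_sub_distrib]
    rw [mySumCollapse (fun α β => (8:ℂ) • gamma2 Γ α β) ν μ,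
        mySumCollapse (fun α β => (8:ℂ) • gamma2 Γ α β) μ ν,
        gamma2_swap μ ν]
    module
  | zero => simp
  | add x y hx hy ihx ihy =>
    have : ∀ α β : Fin 7, trace ((x + y) * gamma2 Γ α β) • gamma2 Γ α β
        = trace (x * gamma2 Γ α β) • gamma2 Γ α β + trace (y * gamma2 Γ α β) • gamma2 Γ α β := by
      intro α β
      rw [add_mul, trace_add, add_smul]
    simp only [this]
    simp only [Finset.sum_add_distrib]
    rw [ihx, ihy, smul_add]
  | smul a x hx ihx =>
    have : ∀ α β : Fin 7, trace ((a • x) * gamma2 Γ α β) • gamma2 Γ α β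
        = a • (trace (x * gamma2 Γ α β) • gamma2 Γ α β) := by
      intro α β
      rw [smul_mul_assoc, trace_smul, smul_eq_mul, mul_smul]
    simp only [this]
    simp only [← Finset.smul_sum]
    rw [ihx, smul_comm]

/-- **Degree-2 Spencer cocycle vanishing** (key step for `H^{2,1}(m, F(4)) = 0` in the odd
contact grading): let `ω ∈ span{Γ_{μν} : μ < ν}`.  If for every `s ∈ ℂ⁸`,
`(1/3)·Σ_{α,β} ((ωs)ᵀCΓ_{αβ}s)·Γ_{αβ} = (sᵀCs)·ω`, then `ω = 0`. -/
theorem degree_two_spencer_cocycle_vanishing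
    (Γ : Fin 7 → Matrix (Fin 8) (Fin 8) ℂ)
    (hΓ : ∀ μ ν, Γ μ * Γ ν + Γ ν * Γ μ =
      if μ = ν then (-2 : ℂ) • (1 : Matrix (Fin 8) (Fin 8) ℂ) else 0)
    (C : Matrix (Fin 8) (Fin 8) ℂ) (hCunit : IsUnit C) (hCsymm : Cᵀ = C)
    (hCΓ : ∀ μ, (Γ μ)ᵀ * C = -(C * Γ μ))
    (ω : Matrix (Fin 8) (Fin 8) ℂ)
    (hω : ω ∈ Submodule.span ℂ
      {m : Matrix (Fin 8) (Fin 8) ℂ | ∃ μ ν : Fin 7, μ < ν ∧ m = gamma2 Γ μ ν})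
    (h : ∀ s : Fin 8 → ℂ,
      (3 : ℂ)⁻¹ • ∑ α, ∑ β,
          ((ω.mulVec s) ⬝ᵥ C.mulVec ((gamma2 Γ α β).mulVec s)) • gamma2 Γ α β
        = (s ⬝ᵥ C.mulVec s) • ω) :
    ω = 0 := by
  have hωC : ωᵀ * C = -(C * ω) := span_transpose_C C hCΓ hω
  have hT : ∀ γ δ : Fin 7, trace (ω * gamma2 Γ γ δ) = 0 := by
    intro γ δ
    set T := trace (ω * gamma2 Γ γ δ) with hTdef
    have hquad : ∀ s : Fin 8 → ℂ,
        s ⬝ᵥ ((16:ℂ) • (C * (ω * gamma2 Γ γ δ)) - ((3:ℂ) * T) • C).mulVec s = 0 := by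
      intro s
      have ht := congrArg (fun M => trace (M * gamma2 Γ γ δ)) (h s)
      simp only [smul_mul_assoc, trace_smul, Finset.sum_mul, trace_sum, smul_eq_mul] at ht
      have htr : ∀ α β : Fin 7, trace (gamma2 Γ α β * gamma2 Γ γ δ) =
          (if α = δ ∧ β = γ then (8:ℂ) else 0) - (if α = γ ∧ β = δ then (8:ℂ) else 0) := by
        intro α β
        rw [trace_mul_comm, trace_orth hΓ]
      simp only [htr, mul_sub, mul_ite, mul_zero, Finset.sum_sub_distrib] at ht
      rw [mySumCollapse (fun α β => ((ω *ᵥ s) ⬝ᵥ C *ᵥ (gamma2 Γ α β *ᵥ s)) * 8) δ γ,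
          mySumCollapse (fun α β => ((ω *ᵥ s) ⬝ᵥ C *ᵥ (gamma2 Γ α β *ᵥ s)) * 8) γ δ] at ht
      rw [gamma2_swap γ δ, neg_mulVec, mulVec_neg, dotProduct_neg] at ht
      have hc : (ω *ᵥ s) ⬝ᵥ C *ᵥ (gamma2 Γ γ δ *ᵥ s)
          = -(s ⬝ᵥ (C * (ω * gamma2 Γ γ δ)) *ᵥ s) := by
        rw [mulVec_mulVec, show ω *ᵥ s = s ᵥ* ωᵀ from (vecMul_transpose ω s).symm,
          ← dotProduct_mulVec, mulVec_mulVec]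
        have e : ωᵀ * (C * gamma2 Γ γ δ) = -(C * (ω * gamma2 Γ γ δ)) := by
          rw [← mul_assoc, hωC, neg_mul, mul_assoc]
        rw [e, neg_mulVec, dotProduct_neg]
      rw [hc] at ht
      rw [sub_mulVec, dotProduct_sub, smul_mulVec, smul_mulVec,
        dotProduct_smul, dotProduct_smul, smul_eq_mul, smul_eq_mul]
      linear_combination 3 * ht
    have hpol := polarize _ hquad
    have hNt : ((16:ℂ) • (C * (ω * gamma2 Γ γ δ)) - ((3:ℂ)*T) • C)ᵀ
        = (16:ℂ) • (C * (gamma2 Γ γ δ * ω)) - ((3:ℂ)*T) • C := by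
      rw [transpose_sub, transpose_smul, transpose_smul, transpose_mul, transpose_mul,
        hCsymm]
      congr 1
      rw [mul_assoc, hωC, mul_neg, ← mul_assoc, gamma2_transpose_C C hCΓ γ δ]
      simp [mul_assoc]
    rw [hNt] at hpol
    have hfact : ((16:ℂ) • (C * (ω * gamma2 Γ γ δ)) - ((3:ℂ)*T) • C)
        + ((16:ℂ) • (C * (gamma2 Γ γ δ * ω)) - ((3:ℂ)*T) • C)
        = C * ((16:ℂ) • (ω * gamma2 Γ γ δ + gamma2 Γ γ δ * ω) - ((6:ℂ)*T) • 1) := by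
      rw [mul_sub, mul_smul_comm, mul_smul_comm, mul_add, mul_one]
      module
    rw [hfact] at hpol
    have hX : (16:ℂ) • (ω * gamma2 Γ γ δ + gamma2 Γ γ δ * ω) - ((6:ℂ)*T) • 1
        = (0 : Matrix (Fin 8) (Fin 8) ℂ) :=
      hCunit.mul_left_cancel (by rw [hpol, mul_zero])
    have htrX := congrArg trace hX
    rw [trace_sub, trace_smul, trace_smul, trace_add, trace_one, trace_mul_comm] at htrX
    rw [hTdef] at htrX ⊢
    simp only [smul_eq_mul, trace_zero, Fintype.card_fin] at htrX
    push_cast at htrX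
    have hcomm : (gamma2 Γ γ δ * ω).trace = (ω * gamma2 Γ γ δ).trace :=
      trace_mul_comm _ _
    linear_combination (-1/16 : ℂ) * htrX + 2 * hcomm
  have hrec := span_reconstruct hΓ hω
  simp only [hT, zero_smul, Finset.sum_const_zero] at hrec
  have h0 : (-16 : ℂ) • ω = 0 := hrec.symm
  rw [smul_eq_zero] at h0
  exact h0.resolve_left (by norm_num)

end
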